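/- Let h ∈ ℕ, c ∈ {0, 1, 2}, m ≥ 1, and let H be a graph that is a minor of the Dyck grid D^{(h,c)}_m. Then for every k ≥ 1, every H-cover S of D^{(h,c)}_{km} satisfies 2|S| ≥ k; in particular, the minimum size of an H-cover of D^{(h,c)}_n grows at least linearly in n. (Lemma 6.3 of the paper, with the surface-embeddability hypothesis replaced, via Proposition 2.2, by the hypothesis that H is a minor of some Dyck grid of the corresponding type.) -/

import Mathlib

open SimpleGraph

/-- `H` is a minor of `G`: there is a family of pairwise disjoint nonempty subsets of `V(G)`,
one for each vertex of `H`, each inducing a connected subgraph of `G`, such that every edge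
of `H` is realized by an edge of `G` between the corresponding branch sets. -/
def IsMinorOf {V : Type*} {W : Type*} (H : SimpleGraph V) (G : SimpleGraph W) : Prop :=
  ∃ X : V → Set W,
    (∀ a, (X a).Nonempty) ∧
    (∀ a b, a ≠ b → Disjoint (X a) (X b)) ∧
    (∀ a, (G.induce (X a)).Connected) ∧
    ∀ a b, H.Adj a b → ∃ x ∈ X a, ∃ y ∈ X b, G.Adj x y

/-- The adjacency relation of the `(m, n)`-cylindrical grid: the Cartesian product of a path on
`m` vertices with a cycle on `n` vertices.  Vertex `v^i_j` is `(i, j)` (0-based first index,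
second index taken in `ZMod n`). -/
def cylRel (m n : ℕ) (p q : Fin m × ZMod n) : Prop :=
  (p.1 = q.1 ∧ q.2 = p.2 + 1) ∨ (p.2 = q.2 ∧ (p.1 : ℕ) + 1 = (q.1 : ℕ))

/-- The Dyck grid `D^{(h,c)}_k`: the `(k, 4k(1+h+c))`-cylindrical grid together with, for each
position `pos ∈ {2, …, h+1}`, the handle edges
`v^1_{4k(pos−1)+j} v^1_{4k(pos−1)+3k−j+1}` and `v^1_{4k(pos−1)+k+j} v^1_{4k(pos−1)+4k−j+1}`
(`j ∈ [k]`), and for each position `pos ∈ {h+2, …, h+1+c}` the cross-cap edges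
`v^1_{4k(pos−1)+j} v^1_{4k(pos−1)+2k+j}` (`j ∈ [2k]`), all on the first cycle. -/
def dyckGrid (h c k : ℕ) : SimpleGraph (Fin k × ZMod (4 * k * (1 + h + c))) :=
  SimpleGraph.fromRel fun p q =>
    cylRel k (4 * k * (1 + h + c)) p q ∨
    ((p.1 : ℕ) = 0 ∧ (q.1 : ℕ) = 0 ∧
      ((∃ pos : ℕ, 2 ≤ pos ∧ pos ≤ h + 1 ∧ ∃ j : ℕ, 1 ≤ j ∧ j ≤ k ∧
          ((p.2 = ((4 * k * (pos - 1) + j : ℕ) : ZMod (4 * k * (1 + h + c))) ∧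
            q.2 = ((4 * k * (pos - 1) + 3 * k - j + 1 : ℕ) : ZMod (4 * k * (1 + h + c)))) ∨
           (p.2 = ((4 * k * (pos - 1) + k + j : ℕ) : ZMod (4 * k * (1 + h + c))) ∧
            q.2 = ((4 * k * (pos - 1) + 4 * k - j + 1 : ℕ) : ZMod (4 * k * (1 + h + c)))))) ∨
       (∃ pos : ℕ, h + 2 ≤ pos ∧ pos ≤ h + 1 + c ∧ ∃ j : ℕ, 1 ≤ j ∧ j ≤ 2 * k ∧
          (p.2 = ((4 * k * (pos - 1) + j : ℕ) : ZMod (4 * k * (1 + h + c))) ∧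
           q.2 = ((4 * k * (pos - 1) + 2 * k + j : ℕ) : ZMod (4 * k * (1 + h + c)))))))

/-!
Scale `D_m` by the factor `k`: every vertex of `D_m` becomes a `k × k` block of `D_{km}`.
If `2|S| < k`, there is a row offset `a` and a column offset `b` such that no vertex of `S`
lies in row `a` of its block, nor in column `b` or column `k-1-b` of its block. In each block,
row `a` and the columns `b`, `k-1-b` form a connected cross avoiding `S`, and these crosses are
the branch sets of a `D_m`-minor of `D_{km} - S`: neighbouring blocks are joined by grid edges, a
handle edge of `D_m` scales to a handle edge of `D_{km}` from column `b` of one block to column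
`k-1-b` of the other (a handle reverses the orientation of the cycle), and a cross-cap edge scales
to one between the two `b` columns. Composing with the `H`-minor of `D_m` contradicts that `S` is
an `H`-cover.
-/

def IsMinorModel {V W : Type*} (H : SimpleGraph V) (G : SimpleGraph W) (X : V → Set W) : Prop :=
  (∀ a, (X a).Nonempty) ∧
    (∀ a b, a ≠ b → Disjoint (X a) (X b)) ∧
    (∀ a, (G.induce (X a)).Connected) ∧
    ∀ a b, H.Adj a b → ∃ x ∈ X a, ∃ y ∈ X b, G.Adj x y

section Minors

variable {U V W : Type*} {H : SimpleGraph U} {G : SimpleGraph V} {G' : SimpleGraph W}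

lemma connected_induce_range_of_chain {n : ℕ} [NeZero n] (f : Fin n → V)
    (hf : ∀ i j : Fin n, (i : ℕ) + 1 = j → G.Adj (f i) (f j)) :
    (G.induce (Set.range f)).Connected := by
  let φ : pathGraph n →g G.induce (Set.range f) :=
    ⟨fun i => ⟨f i, i, rfl⟩, fun hij =>
      (pathGraph_adj.1 hij).elim (hf _ _) fun hji => (hf _ _ hji).symm⟩
  refine (⟨pathGraph_preconnected n⟩ : (pathGraph n).Connected).map φ ?_
  rintro ⟨_, i, rfl⟩
  exact ⟨i, rfl⟩

lemma connected_induce_biUnion {T : Set V} (hT : (G.induce T).Connected) (Y : V → Set W)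
    (hY : ∀ v ∈ T, (G'.induce (Y v)).Connected)
    (hadj : ∀ v ∈ T, ∀ w ∈ T, G.Adj v w → ∃ x ∈ Y v, ∃ y ∈ Y w, G'.Adj x y) :
    (G'.induce (⋃ v ∈ T, Y v)).Connected := by
  set Z := ⋃ v ∈ T, Y v
  have hsub : ∀ v ∈ T, Y v ⊆ Z := fun v hv => Set.subset_biUnion_of_mem hv
  have inside : ∀ v (hv : v ∈ T) x y (hx : x ∈ Y v) (hy : y ∈ Y v),
      (G'.induce Z).Reachable ⟨x, hsub v hv hx⟩ ⟨y, hsub v hv hy⟩ := fun v hv x y hx hy =>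
    ((hY v hv).preconnected ⟨x, hx⟩ ⟨y, hy⟩).map (induceHomOfLE G' (hsub v hv)).toHom
  have along : ∀ (v w : T), (G.induce T).Walk v w → ∀ x (hx : x ∈ Y v) y (hy : y ∈ Y w),
      (G'.induce Z).Reachable ⟨x, hsub v v.2 hx⟩ ⟨y, hsub w w.2 hy⟩ := by
    intro v w p
    induction p with
    | @nil u => exact fun x hx y hy => inside _ u.2 x y hx hy
    | @cons u u' w huu' p ih =>
      intro x hx y hy
      obtain ⟨x', hx', y', hy', hx'y'⟩ := hadj u u.2 u' u'.2 huu'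
      have hstep : (G'.induce Z).Adj ⟨x', hsub u u.2 hx'⟩ ⟨y', hsub u' u'.2 hy'⟩ := hx'y'
      exact (inside _ u.2 x x' hx hx').trans (hstep.reachable.trans (ih y' hy' y hy))
  obtain ⟨v₀, hv₀⟩ := hT.nonempty
  obtain ⟨x₀, hx₀⟩ := (hY v₀ hv₀).nonempty
  refine (connected_iff _).2 ⟨?_, ⟨⟨x₀, hsub v₀ hv₀ hx₀⟩⟩⟩
  rintro ⟨x, hx⟩ ⟨y, hy⟩
  simp only [Z, Set.mem_iUnion₂] at hx hy
  obtain ⟨v, hv, hxv⟩ := hx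
  obtain ⟨w, hw, hyw⟩ := hy
  obtain ⟨p⟩ := hT.preconnected ⟨v, hv⟩ ⟨w, hw⟩
  exact along ⟨v, hv⟩ ⟨w, hw⟩ p x hxv y hyw

lemma IsMinorOf.trans (h₁ : IsMinorOf H G) (h₂ : IsMinorOf G G') : IsMinorOf H G' := by
  obtain ⟨X, hXne, hXdisj, hXconn, hXadj⟩ := h₁
  obtain ⟨Y, hYne, hYdisj, hYconn, hYadj⟩ := h₂
  refine ⟨fun a => ⋃ v ∈ X a, Y v, fun a => ?_, fun a b hab => ?_, fun a => ?_,
    fun a b hab => ?_⟩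
  · obtain ⟨v, hv⟩ := hXne a
    obtain ⟨x, hx⟩ := hYne v
    exact ⟨x, Set.mem_biUnion hv hx⟩
  · refine Set.disjoint_iUnion₂_left.2 fun v hv => Set.disjoint_iUnion₂_right.2 fun w hw => ?_
    exact hYdisj v w fun hvw => (hXdisj a b hab).ne_of_mem hv hw hvw
  · exact connected_induce_biUnion (hXconn a) Y (fun v _ => hYconn v)
      fun v _ w _ => hYadj v w
  · obtain ⟨v, hv, w, hw, hvw⟩ := hXadj a b hab
    obtain ⟨x, hx, y, hy, hxy⟩ := hYadj v w hvw
    exact ⟨x, Set.mem_biUnion hv hx, y, Set.mem_biUnion hw hy, hxy⟩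

lemma IsMinorModel.isMinorOf_induce {X : U → Set V} (hX : IsMinorModel H G X) {s : Set V}
    (hXs : ∀ a, X a ⊆ s) : IsMinorOf H (G.induce s) := by
  obtain ⟨hne, hdisj, hconn, hadj⟩ := hX
  refine ⟨fun a => {p : s | (p : V) ∈ X a}, fun a => ?_, fun a b hab => ?_, fun a => ?_,
    fun a b hab => ?_⟩
  · obtain ⟨x, hx⟩ := hne a
    exact ⟨⟨x, hXs a hx⟩, hx⟩
  · exact Set.disjoint_left.2 fun p hpa hpb => (hdisj a b hab).ne_of_mem hpa hpb rfl
  · let φ : G.induce (X a) →g (G.induce s).induce {p : s | (p : V) ∈ X a} :=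
      ⟨fun p => ⟨⟨p, hXs a p.2⟩, p.2⟩, id⟩
    refine (hconn a).map φ ?_
    rintro ⟨⟨p, -⟩, hp⟩
    exact ⟨⟨p, hp⟩, rfl⟩
  · obtain ⟨x, hx, y, hy, hxy⟩ := hadj a b hab
    exact ⟨⟨x, hXs a hx⟩, hx, ⟨y, hXs b hy⟩, hy, hxy⟩

end Minors

section Subdivision

variable {k M N : ℕ}

/-- Column `j` of the small cycle becomes the columns `k(j-1)+1, …, kj` of the big one (the
1-based positions used by the handle formulas of `dyckGrid`); `blockCol k j t` is the `t`-th of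
them, counted from `0`. -/
def blockCol (k : ℕ) (j : ZMod M) (t : ℕ) : ZMod N :=
  ((k * j.val + t : ℕ) : ZMod N) - ((k - 1 : ℕ) : ZMod N)

def colPos (k : ℕ) (x : ZMod N) : ℕ :=
  (x + ((k - 1 : ℕ) : ZMod N)).val

lemma blockCol_succ (j : ZMod M) (t : ℕ) :
    (blockCol k j (t + 1) : ZMod N) = blockCol k j t + 1 := by
  simp only [blockCol]
  push_cast
  ring

lemma blockCol_natCast (hN : N = k * M) (n t : ℕ) :
    (blockCol k (n : ZMod M) t : ZMod N) =
      ((k * n + t : ℕ) : ZMod N) - ((k - 1 : ℕ) : ZMod N) := by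
  subst hN
  have hmod : ((k * (n % M) : ℕ) : ZMod (k * M)) = ((k * n : ℕ) : ZMod (k * M)) :=
    (ZMod.natCast_eq_natCast_iff _ _ _).2 ((Nat.mod_modEq n M).mul_left' k)
  rw [blockCol, ZMod.val_natCast, Nat.cast_add, hmod, ← Nat.cast_add]

lemma blockCol_natCast_eq (hN : N = k * M) {n t n' : ℕ} (h : k * n + t = n' + (k - 1)) :
    (blockCol k (n : ZMod M) t : ZMod N) = n' := by
  rw [blockCol_natCast hN, h, Nat.cast_add, add_sub_cancel_right]

lemma blockCol_add_one [NeZero k] [NeZero M] (hN : N = k * M) (j : ZMod M) :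
    (blockCol k (j + 1) 0 : ZMod N) = blockCol k j (k - 1) + 1 := by
  have hj : j + 1 = ((j.val + 1 : ℕ) : ZMod M) := by push_cast [ZMod.natCast_zmod_val]; rfl
  rw [← blockCol_succ, Nat.sub_add_cancel NeZero.one_le, hj, blockCol_natCast hN]
  conv_rhs => rw [← ZMod.natCast_zmod_val j, blockCol_natCast hN]
  ring_nf

lemma colPos_blockCol [NeZero M] (hN : N = k * M) (j : ZMod M) {t : ℕ} (ht : t < k) :
    colPos k (blockCol k j t : ZMod N) = k * j.val + t := by
  have hj : j.val + 1 ≤ M := j.val_lt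
  rw [colPos, blockCol, sub_add_cancel, ZMod.val_natCast, Nat.mod_eq_of_lt]
  subst hN
  nlinarith

lemma colPos_blockCol_div [NeZero M] (hN : N = k * M) (j : ZMod M) {t : ℕ} (ht : t < k) :
    colPos k (blockCol k j t : ZMod N) / k = j.val := by
  rw [colPos_blockCol hN j ht, Nat.mul_add_div (by omega), Nat.div_eq_of_lt ht, add_zero]

lemma colPos_blockCol_mod [NeZero M] (hN : N = k * M) (j : ZMod M) {t : ℕ} (ht : t < k) :
    colPos k (blockCol k j t : ZMod N) % k = t := by
  rw [colPos_blockCol hN j ht, Nat.mul_add_mod, Nat.mod_eq_of_lt ht]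

lemma eq_of_blockCol_eq [NeZero M] (hN : N = k * M) {j j' : ZMod M} {t t' : ℕ} (ht : t < k)
    (ht' : t' < k) (h : (blockCol k j t : ZMod N) = blockCol k j' t') : j = j' := by
  apply ZMod.val_injective
  rw [← colPos_blockCol_div hN j ht, ← colPos_blockCol_div hN j' ht', h]

end Subdivision

def cylGrid (R N : ℕ) : SimpleGraph (Fin R × ZMod N) :=
  SimpleGraph.fromRel (cylRel R N)

lemma cylGrid_adj_add_one {R N : ℕ} [Fact (1 < N)] (r : Fin R) (x : ZMod N) :
    (cylGrid R N).Adj (r, x) (r, x + 1) := by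
  refine ⟨fun h => ?_, Or.inl (Or.inl ⟨rfl, rfl⟩)⟩
  simpa using congrArg Prod.snd h

lemma cylGrid_adj_of_val_add_one {R N : ℕ} {r r' : Fin R} (h : (r : ℕ) + 1 = r') (x : ZMod N) :
    (cylGrid R N).Adj (r, x) (r', x) := by
  refine ⟨fun h' => ?_, Or.inl (Or.inr ⟨rfl, h⟩)⟩
  have := congrArg (fun p => (p.1 : ℕ)) h'
  simp only at this
  omega

def handleRel (h K n : ℕ) (x y : ZMod n) : Prop :=
  ∃ pos : ℕ, 2 ≤ pos ∧ pos ≤ h + 1 ∧ ∃ j : ℕ, 1 ≤ j ∧ j ≤ K ∧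
    ((x = ((4 * K * (pos - 1) + j : ℕ) : ZMod n) ∧
        y = ((4 * K * (pos - 1) + 3 * K - j + 1 : ℕ) : ZMod n)) ∨
      (x = ((4 * K * (pos - 1) + K + j : ℕ) : ZMod n) ∧
        y = ((4 * K * (pos - 1) + 4 * K - j + 1 : ℕ) : ZMod n)))

def crossCapRel (h c K n : ℕ) (x y : ZMod n) : Prop :=
  ∃ pos : ℕ, h + 2 ≤ pos ∧ pos ≤ h + 1 + c ∧ ∃ j : ℕ, 1 ≤ j ∧ j ≤ 2 * K ∧
    (x = ((4 * K * (pos - 1) + j : ℕ) : ZMod n) ∧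
      y = ((4 * K * (pos - 1) + 2 * K + j : ℕ) : ZMod n))

def dyckRel (h c K : ℕ) (p q : Fin K × ZMod (4 * K * (1 + h + c))) : Prop :=
  cylRel K (4 * K * (1 + h + c)) p q ∨
    ((p.1 : ℕ) = 0 ∧ (q.1 : ℕ) = 0 ∧
      (handleRel h K (4 * K * (1 + h + c)) p.2 q.2 ∨
        crossCapRel h c K (4 * K * (1 + h + c)) p.2 q.2))

lemma dyckGrid_eq_fromRel (h c K : ℕ) : dyckGrid h c K = fromRel (dyckRel h c K) := rfl

lemma cylGrid_le_dyckGrid (h c K : ℕ) : cylGrid K (4 * K * (1 + h + c)) ≤ dyckGrid h c K :=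
  fun _ _ ⟨hne, hpq⟩ => ⟨hne, hpq.imp Or.inl Or.inl⟩

def rowOffset {k m : ℕ} [NeZero k] (r : Fin (k * m)) : Fin k := Fin.ofNat k r

def colOffset (k : ℕ) [NeZero k] {N : ℕ} (x : ZMod N) : Fin k := Fin.ofNat k (colPos k x)

section Cross

variable {k m M N : ℕ}

def blockRow (i : Fin m) (s : Fin k) : Fin (k * m) :=
  Fin.cast (Nat.mul_comm m k) (finProdFinEquiv (i, s))

@[simp]
lemma blockRow_val (i : Fin m) (s : Fin k) : (blockRow i s : ℕ) = s + k * i := by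
  simp [blockRow]

lemma blockRow_inj {i i' : Fin m} {s s' : Fin k} :
    blockRow i s = blockRow i' s' ↔ i = i' ∧ s = s' :=
  (Fin.cast_injective _).eq_iff.trans (finProdFinEquiv.injective.eq_iff.trans Prod.ext_iff)

/-- The mirrored column `b.rev` is where the orientation-reversing handle edges arrive. -/
def cross (a b : Fin k) (u : Fin m × ZMod M) : Set (Fin (k * m) × ZMod N) :=
  Set.range (fun t : Fin k => (blockRow u.1 a, blockCol k u.2 t)) ∪
    Set.range (fun s : Fin k => (blockRow u.1 s, blockCol k u.2 b)) ∪
    Set.range (fun s : Fin k => (blockRow u.1 s, blockCol k u.2 b.rev))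

variable {a b : Fin k} {u : Fin m × ZMod M}

lemma mem_cross_of_row (t : Fin k) :
    ((blockRow u.1 a, blockCol k u.2 t) : Fin (k * m) × ZMod N) ∈ cross a b u :=
  Or.inl (Or.inl ⟨t, rfl⟩)

lemma mem_cross_of_col (s : Fin k) :
    ((blockRow u.1 s, blockCol k u.2 b) : Fin (k * m) × ZMod N) ∈ cross a b u :=
  Or.inl (Or.inr ⟨s, rfl⟩)

lemma mem_cross_of_col_rev (s : Fin k) :
    ((blockRow u.1 s, blockCol k u.2 b.rev) : Fin (k * m) × ZMod N) ∈ cross a b u :=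
  Or.inr ⟨s, rfl⟩

lemma exists_of_mem_cross {p : Fin (k * m) × ZMod N} (hp : p ∈ cross a b u) :
    ∃ s t : Fin k,
      p = (blockRow u.1 s, blockCol k u.2 t) ∧ (s = a ∨ t = b ∨ t = b.rev) := by
  rcases hp with (⟨t, rfl⟩ | ⟨s, rfl⟩) | ⟨s, rfl⟩
  exacts [⟨a, t, rfl, .inl rfl⟩, ⟨s, b, rfl, .inr (.inl rfl)⟩,
    ⟨s, b.rev, rfl, .inr (.inr rfl)⟩]

lemma cross_nonempty : (cross a b u : Set (Fin (k * m) × ZMod N)).Nonempty :=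
  ⟨_, mem_cross_of_row a⟩

lemma cross_disjoint [NeZero M] (hN : N = k * M) {v : Fin m × ZMod M} (huv : u ≠ v) :
    Disjoint (cross a b u : Set (Fin (k * m) × ZMod N)) (cross a b v) := by
  refine Set.disjoint_left.2 fun p hpu hpv => huv ?_
  obtain ⟨s, t, rfl, -⟩ := exists_of_mem_cross hpu
  obtain ⟨s', t', hp, -⟩ := exists_of_mem_cross hpv
  obtain ⟨hrow, hcol⟩ := Prod.ext_iff.1 hp
  exact Prod.ext (blockRow_inj.1 hrow).1
    (eq_of_blockCol_eq hN t.2 t'.2 hcol)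

lemma cross_connected [NeZero k] [Fact (1 < N)] {G : SimpleGraph (Fin (k * m) × ZMod N)}
    (hG : cylGrid (k * m) N ≤ G) : (G.induce (cross a b u)).Connected := by
  have row : (G.induce (Set.range fun t : Fin k =>
      ((blockRow u.1 a, blockCol k u.2 t) : Fin (k * m) × ZMod N))).Connected := by
    refine connected_induce_range_of_chain _ fun t t' htt' => hG ?_
    rw [← htt', blockCol_succ]
    exact cylGrid_adj_add_one _ _
  have col : ∀ t : Fin k, (G.induce (Set.range fun s : Fin k =>
      ((blockRow u.1 s, blockCol k u.2 t) : Fin (k * m) × ZMod N))).Connected := fun t =>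
    connected_induce_range_of_chain _ fun s s' hss' =>
      hG (cylGrid_adj_of_val_add_one (by simp only [blockRow_val]; omega) _)
  have row_col := induce_union_connected row.preconnected (col b).preconnected
    ⟨_, ⟨b, rfl⟩, ⟨a, rfl⟩⟩
  exact induce_union_connected row_col.preconnected (col b.rev).preconnected
    ⟨_, Or.inl ⟨b.rev, rfl⟩, ⟨a, rfl⟩⟩

lemma cross_subset_compl [NeZero k] [NeZero M] (hN : N = k * M) {S : Set (Fin (k * m) × ZMod N)}
    (hS : ∀ p ∈ S,
      rowOffset p.1 ≠ a ∧ colOffset k p.2 ≠ b ∧ colOffset k p.2 ≠ b.rev) :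
    cross a b u ⊆ Sᶜ := by
  intro p hp hpS
  obtain ⟨s, t, rfl, hst⟩ := exists_of_mem_cross hp
  obtain ⟨hsa, htb, htb'⟩ := hS _ hpS
  have hs : rowOffset (blockRow u.1 s) = s := by
    ext
    simp [rowOffset, Nat.mod_eq_of_lt s.2]
  have ht : colOffset k (blockCol k u.2 t : ZMod N) = t := by
    ext
    simp [colOffset, colPos_blockCol_mod hN _ t.2]
  rw [hs] at hsa
  rw [ht] at htb htb'
  rcases hst with rfl | rfl | rfl <;> contradiction

end Cross

lemma exists_fin_pair_avoiding {α : Type*} {k : ℕ} {s : Set α} (hs : s.Finite)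
    (hk : 2 * s.ncard < k) (f g : α → Fin k) :
    ∃ a b : Fin k, ∀ x ∈ s, f x ≠ a ∧ g x ≠ b ∧ g x ≠ b.rev := by
  classical
  rw [Set.ncard_eq_toFinset_card s hs] at hk
  obtain ⟨a, -, ha⟩ := Finset.exists_mem_notMem_of_card_lt_card
    (s := hs.toFinset.image f) (t := Finset.univ) (by
      rw [Finset.card_univ, Fintype.card_fin]
      exact Finset.card_image_le.trans_lt (by omega))
  obtain ⟨b, -, hb⟩ := Finset.exists_mem_notMem_of_card_lt_card
    (s := hs.toFinset.image g ∪ hs.toFinset.image (Fin.rev ∘ g)) (t := Finset.univ) (by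
      rw [Finset.card_univ, Fintype.card_fin]
      refine (Finset.card_union_le _ _).trans_lt ?_
      have := (Finset.card_image_le (s := hs.toFinset) (f := g))
      have := (Finset.card_image_le (s := hs.toFinset) (f := Fin.rev ∘ g))
      omega)
  simp only [Finset.mem_union, Finset.mem_image, Set.Finite.mem_toFinset, Function.comp_apply,
    not_or, not_exists, not_and] at ha hb
  exact ⟨a, b, fun x hx =>
    ⟨ha x hx, hb.1 x hx, fun h => hb.2 x hx (by rw [h, Fin.rev_rev])⟩⟩

section Edges

variable {k m M N : ℕ} [NeZero k] {a b : Fin k}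

lemma exists_cylRel_cross [NeZero M] (hN : N = k * M) {u v : Fin m × ZMod M}
    (huv : cylRel m M u v) :
    ∃ x ∈ cross a b u, ∃ y ∈ cross a b v, cylRel (k * m) N x y := by
  rcases huv with ⟨hrow, hcol⟩ | ⟨hcol, hrow⟩
  · refine ⟨_, mem_cross_of_row (Fin.rev 0), _, mem_cross_of_row 0,
      Or.inl ⟨by rw [hrow], ?_⟩⟩
    simp only [hcol, Fin.val_rev, Fin.val_zero, zero_add, blockCol_add_one hN]
  · refine ⟨_, mem_cross_of_col (Fin.rev 0), _, mem_cross_of_col 0,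
      Or.inr ⟨by rw [hcol], ?_⟩⟩
    simp only [blockRow_val, Fin.val_rev, Fin.val_zero, ← hrow, mul_add]
    have := NeZero.one_le (n := k)
    omega

lemma handleRel_blockCol (hN : N = k * M) {h : ℕ} {x y : ZMod M} (hxy : handleRel h m M x y) :
    handleRel h (k * m) N (blockCol k x b) (blockCol k y b.rev) := by
  obtain ⟨pos, hpos, hposh, j, hj, hjm, hxy⟩ := hxy
  obtain ⟨P, rfl⟩ : ∃ P, pos = P + 1 := ⟨pos - 1, by omega⟩
  obtain ⟨i, rfl⟩ : ∃ i, j = i + 1 := ⟨j - 1, by omega⟩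
  have hk := NeZero.one_le (n := k)
  have hki : k * i + k ≤ k * m := by nlinarith
  have hb : (b : ℕ) + 1 ≤ k := b.2
  refine ⟨P + 1, hpos, hposh, k * i + b + 1, by omega, by omega, ?_⟩
  simp only [Nat.add_sub_cancel] at hxy ⊢
  rcases hxy with ⟨rfl, rfl⟩ | ⟨rfl, rfl⟩
  · refine .inl ⟨blockCol_natCast_eq hN ?_, blockCol_natCast_eq hN ?_⟩
    · zify [hk]; ring
    · have hi : i + 1 ≤ 4 * m * P + 3 * m := by nlinarith
      have hJ : k * i + b + 1 ≤ 4 * (k * m) * P + 3 * (k * m) := by nlinarith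
      rw [Fin.val_rev]; zify [hk, hb, hi, hJ]; ring
  · refine .inr ⟨blockCol_natCast_eq hN ?_, blockCol_natCast_eq hN ?_⟩
    · zify [hk]; ring
    · have hi : i + 1 ≤ 4 * m * P + 4 * m := by nlinarith
      have hJ : k * i + b + 1 ≤ 4 * (k * m) * P + 4 * (k * m) := by nlinarith
      rw [Fin.val_rev]; zify [hk, hb, hi, hJ]; ring

lemma crossCapRel_blockCol (hN : N = k * M) {h c : ℕ} {x y : ZMod M}
    (hxy : crossCapRel h c m M x y) :
    crossCapRel h c (k * m) N (blockCol k x b) (blockCol k y b) := by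
  obtain ⟨pos, hpos, hposh, j, hj, hjm, rfl, rfl⟩ := hxy
  obtain ⟨P, rfl⟩ : ∃ P, pos = P + 1 := ⟨pos - 1, by omega⟩
  obtain ⟨i, rfl⟩ : ∃ i, j = i + 1 := ⟨j - 1, by omega⟩
  have hk := NeZero.one_le (n := k)
  have hki : k * i + k ≤ 2 * (k * m) := by nlinarith
  have hb : (b : ℕ) < k := b.2
  refine ⟨P + 1, hpos, hposh, k * i + b + 1, by omega, by omega,
    blockCol_natCast_eq hN ?_, blockCol_natCast_eq hN ?_⟩ <;>
  · simp only [Nat.add_sub_cancel]; zify [hk]; ring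

end Edges

section Dyck

variable {h c k m : ℕ} [NeZero k] [NeZero m]

lemma exists_dyckRel_cross (a b : Fin k) {u v : Fin m × ZMod (4 * m * (1 + h + c))}
    (huv : dyckRel h c m u v) :
    ∃ x ∈ cross a b u, ∃ y ∈ cross a b v, dyckRel h c (k * m) x y := by
  have hN : 4 * (k * m) * (1 + h + c) = k * (4 * m * (1 + h + c)) := by ring
  rcases huv with hcyl | ⟨hu, hv, hhandle | hcap⟩
  · obtain ⟨x, hx, y, hy, hxy⟩ := exists_cylRel_cross hN hcyl
    exact ⟨x, hx, y, hy, .inl hxy⟩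
  · exact ⟨_, mem_cross_of_col 0, _, mem_cross_of_col_rev 0,
      .inr ⟨by simp [hu], by simp [hv], .inl (handleRel_blockCol hN hhandle)⟩⟩
  · exact ⟨_, mem_cross_of_col 0, _, mem_cross_of_col 0,
      .inr ⟨by simp [hu], by simp [hv], .inr (crossCapRel_blockCol hN hcap)⟩⟩

lemma isMinorModel_cross (a b : Fin k) :
    IsMinorModel (dyckGrid h c m) (dyckGrid h c (k * m)) (cross a b) := by
  have hN : 4 * (k * m) * (1 + h + c) = k * (4 * m * (1 + h + c)) := by ring
  have : Fact (1 < 4 * (k * m) * (1 + h + c)) := ⟨by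
    have : 1 ≤ k * m := Nat.one_le_iff_ne_zero.2 (mul_ne_zero (NeZero.ne k) (NeZero.ne m))
    nlinarith⟩
  refine ⟨fun u => cross_nonempty, fun u v => cross_disjoint hN,
    fun u => cross_connected (cylGrid_le_dyckGrid h c _), fun u v huv => ?_⟩
  rw [dyckGrid_eq_fromRel, fromRel_adj] at huv
  obtain ⟨huv, hrel | hrel⟩ := huv
  · obtain ⟨x, hx, y, hy, hxy⟩ := exists_dyckRel_cross a b hrel
    exact ⟨x, hx, y, hy, ⟨(cross_disjoint hN huv).ne_of_mem hx hy, .inl hxy⟩⟩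
  · obtain ⟨y, hy, x, hx, hyx⟩ := exists_dyckRel_cross a b hrel
    exact ⟨x, hx, y, hy, ⟨(cross_disjoint hN huv).ne_of_mem hx hy, .inr hyx⟩⟩

end Dyck

theorem stmt_11_general {V : Type*} (h c : ℕ) (m : ℕ) (hm : 1 ≤ m)
    (H : SimpleGraph V) (hH : IsMinorOf H (dyckGrid h c m))
    (k : ℕ)
    (S : Set (Fin (k * m) × ZMod (4 * (k * m) * (1 + h + c))))
    (hcov : ¬ IsMinorOf H ((dyckGrid h c (k * m)).induce Sᶜ)) :
    k ≤ 2 * S.ncard := by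
  by_contra! hk
  have : NeZero k := ⟨by omega⟩
  have : NeZero m := ⟨by omega⟩
  obtain ⟨a, b, hab⟩ :=
    exists_fin_pair_avoiding S.toFinite hk (fun p => rowOffset p.1) (fun p => colOffset k p.2)
  refine hcov (hH.trans ((isMinorModel_cross a b).isMinorOf_induce fun u => ?_))
  exact cross_subset_compl (by ring) hab

/-- Lemma 6.3, via Proposition 2.2. Let `h ∈ ℕ`, `c ∈ {0,1,2}`, `m ≥ 1`, and
let `H` be a graph that is a minor of the Dyck grid `D^{(h,c)}_m`.  Then for every `k ≥ 1`, every
`H`-cover `S` of `D^{(h,c)}_{km}` satisfies `2|S| ≥ k`. -/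
theorem stmt_11 {V : Type*} [Fintype V] (h c : ℕ) (hc : c ≤ 2) (m : ℕ) (hm : 1 ≤ m)
    (H : SimpleGraph V) (hH : IsMinorOf H (dyckGrid h c m))
    (k : ℕ) (hk : 1 ≤ k)
    (S : Set (Fin (k * m) × ZMod (4 * (k * m) * (1 + h + c))))
    (hcov : ¬ IsMinorOf H ((dyckGrid h c (k * m)).induce Sᶜ)) :
    k ≤ 2 * S.ncard :=
  stmt_11_general h c m hm H hH k S hcov
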